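/- Fix r > 0 and a sequence r_j > 0 with r_j -> 0, and define linear maps Lambda_j(z_1, ..., z_n) = (z_1 / r_j, z_2 / sqrt(r_j), ..., z_n / sqrt(r_j)). Then for every compact set K contained in P_{1/(2r)} there exists J such that for all j >= J, K is contained in Lambda_j(B_r(r e_1)). -/

import Mathlib

/-!
The preimage of `z` under `Λ_s` is `(s z₁, √s z₂, …, √s zₙ)`, and expanding
`|s z₁ - r|² + s ∑_{j ≥ 2} |z_j|² < r²` shows that it lies in `B_r(r e₁)` exactly when
`s |z₁|² < 2r Re z₁ - ∑_{j ≥ 2} |z_j|²`. The right-hand side is positive on `P_{1/(2r)}`, so on a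
compact `K ⊆ P_{1/(2r)}` the inequality holds uniformly once `s` is small (tube lemma).
-/

open Complex Filter

/-- The Siegel-type paraboloid domain `P_α ⊆ ℂ^{n+1}`. -/
def Para (n : ℕ) (α : ℝ) : Set (EuclideanSpace ℂ (Fin (n + 1))) :=
  {z | α * ∑ i ∈ Finset.univ.erase 0, ‖z i‖ ^ 2 < (z 0).re}

/-- The anisotropic dilation `Λ` with parameter `s`:
`(z₁,…,z_n) ↦ (z₁/s, z₂/√s, …, z_n/√s)`. -/
noncomputable def Lam (n : ℕ) (s : ℝ) (z : EuclideanSpace ℂ (Fin (n + 1))) :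
    EuclideanSpace ℂ (Fin (n + 1)) :=
  WithLp.toLp 2 (fun i => if i = 0 then z i / (s : ℂ) else z i / (Real.sqrt s : ℂ))

-- `2r` times the defining function of `P_{1/(2r)}`.
noncomputable def paraGap (n : ℕ) (r : ℝ) (z : EuclideanSpace ℂ (Fin (n + 1))) : ℝ :=
  2 * r * (z 0).re - ∑ i ∈ Finset.univ.erase 0, ‖z i‖ ^ 2

theorem continuous_paraGap (n : ℕ) (r : ℝ) : Continuous (paraGap n r) := by
  unfold paraGap
  fun_prop

theorem paraGap_pos {n : ℕ} {r : ℝ} (hr : 0 < r) {z : EuclideanSpace ℂ (Fin (n + 1))}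
    (hz : z ∈ Para n (1 / (2 * r))) : 0 < paraGap n r z := by
  have h : (∑ i ∈ Finset.univ.erase 0, ‖z i‖ ^ 2) / (2 * r) < (z 0).re := by
    simpa [Para, div_eq_inv_mul] using hz
  rw [div_lt_iff₀ (by positivity)] at h
  unfold paraGap
  linarith

theorem IsCompact.eventually_forall_mul_lt {X : Type*} [TopologicalSpace X] {K : Set X}
    (hK : IsCompact K) {f g : X → ℝ} (hf : Continuous f) (hg : Continuous g)
    (hpos : ∀ x ∈ K, 0 < g x) : ∀ᶠ s in nhds (0 : ℝ), ∀ x ∈ K, s * f x < g x := by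
  refine hK.eventually_forall_of_forall_eventually fun x hx => ?_
  have hopen : IsOpen {p : ℝ × X | p.1 * f p.2 < g p.2} :=
    isOpen_lt (continuous_fst.mul (hf.comp continuous_snd)) (hg.comp continuous_snd)
  exact hopen.mem_nhds (by simpa using hpos x hx)

theorem Lam_Lam_inv (n : ℕ) {s : ℝ} (hs : 0 < s) (z : EuclideanSpace ℂ (Fin (n + 1))) :
    Lam n s (Lam n s⁻¹ z) = z := by
  have hsqrt : (Real.sqrt s : ℂ) ≠ 0 := ofReal_ne_zero.mpr (Real.sqrt_pos.mpr hs).ne'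
  ext i
  by_cases hi : i = 0 <;> simp [Lam, hi, Real.sqrt_inv, hs.ne', hsqrt]

theorem dist_Lam_inv_sq (n : ℕ) {s : ℝ} (hs : 0 ≤ s) (r : ℝ)
    (z : EuclideanSpace ℂ (Fin (n + 1))) :
    dist (Lam n s⁻¹ z) (EuclideanSpace.single 0 (r : ℂ)) ^ 2 =
      r ^ 2 - s * (paraGap n r z - s * ‖z 0‖ ^ 2) := by
  set w : EuclideanSpace ℂ (Fin (n + 1)) := Lam n s⁻¹ z - EuclideanSpace.single 0 (r : ℂ)
  have hhead : ‖w 0‖ ^ 2 = r ^ 2 - 2 * r * s * (z 0).re + s ^ 2 * ‖z 0‖ ^ 2 := by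
    simp only [w, Lam, PiLp.sub_apply, PiLp.single_apply, if_true]
    rw [Complex.sq_norm, Complex.sq_norm, Complex.normSq_apply, Complex.normSq_apply]
    simp only [ofReal_inv, div_inv_eq_mul, sub_re, mul_re, ofReal_re, ofReal_im, mul_zero,
      sub_zero, sub_im, mul_im, zero_add]
    ring
  have htail : ∀ i ∈ Finset.univ.erase 0, ‖w i‖ ^ 2 = s * ‖z i‖ ^ 2 := by
    intro i hi
    simp [w, Lam, Finset.ne_of_mem_erase hi, Real.sqrt_inv, mul_pow, Real.sq_sqrt hs, mul_comm]
  rw [dist_eq_norm, EuclideanSpace.norm_sq_eq, ← Finset.add_sum_erase _ _ (Finset.mem_univ 0),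
    hhead, Finset.sum_congr rfl htail, ← Finset.mul_sum, paraGap]
  ring

theorem mem_Lam_image_ball {n : ℕ} {r s : ℝ} (hr : 0 < r) (hs : 0 < s)
    {z : EuclideanSpace ℂ (Fin (n + 1))} (h : s * ‖z 0‖ ^ 2 < paraGap n r z) :
    z ∈ Lam n s '' Metric.ball (EuclideanSpace.single 0 (r : ℂ)) r := by
  refine ⟨Lam n s⁻¹ z, ?_, Lam_Lam_inv n hs z⟩
  rw [Metric.mem_ball, ← sq_lt_sq₀ dist_nonneg hr.le, dist_Lam_inv_sq n hs.le]
  linarith [mul_pos hs (sub_pos.mpr h)]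

/-- Every compact subset of `P_{1/(2r)}` is eventually contained in
`Λ_j(B_r(r e₁))`. -/
theorem stmt_1 (n : ℕ) (r : ℝ) (hr : 0 < r)
    (rj : ℕ → ℝ) (hrj : ∀ j, 0 < rj j)
    (hlim : Tendsto rj atTop (nhds 0))
    (K : Set (EuclideanSpace ℂ (Fin (n + 1))))
    (hKc : IsCompact K) (hKP : K ⊆ Para n (1 / (2 * r))) :
    ∃ J : ℕ, ∀ j ≥ J,
      K ⊆ Lam n (rj j) '' Metric.ball (EuclideanSpace.single 0 (r : ℂ)) r := by
  have hsmall : ∀ᶠ s in nhds (0 : ℝ), ∀ z ∈ K, s * ‖z 0‖ ^ 2 < paraGap n r z :=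
    hKc.eventually_forall_mul_lt (by fun_prop) (continuous_paraGap n r)
      fun z hz => paraGap_pos hr (hKP hz)
  obtain ⟨J, hJ⟩ := eventually_atTop.mp (hlim.eventually hsmall)
  exact ⟨J, fun j hj z hz => mem_Lam_image_ball hr (hrj j) (hJ j hj z hz)⟩
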